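/- arXiv:math/0510416 — 2 statements merged into one kernel-verified Lean document; each statement's English description precedes it below -/
import Mathlib

section
/- Let G be a group and let ρ, ρ' : G → SL(2,ℂ) be two group homomorphisms such that for every g ∈ G, either ρ(g) = ρ'(g) or ρ(g) = −ρ'(g). Then for every element α of the subgroup of G generated by the set of squares {g² : g ∈ G}, the traces agree: trace(ρ(α)) = trace(ρ'(α)). In particular, if trace(ρ(α)) = −2 for such an α, then trace(ρ'(α)) = −2 as well. -/
open Matrix

/-- If `ρ, ρ' : G → SL(2,ℂ)` agree up to sign on every element (two lifts of the
same homomorphism into `PSL(2,ℂ)`), then their traces agree on the subgroup of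
`G` generated by squares; in particular, if the trace of `ρ α` is `-2` for such
an `α`, so is the trace of `ρ' α`. -/
theorem trace_eq_on_squares_subgroup
    (G : Type*) [Group G]
    (ρ ρ' : G →* Matrix.SpecialLinearGroup (Fin 2) ℂ)
    (h : ∀ g : G, ρ g = ρ' g ∨ ρ g = -ρ' g) :
    (∀ α ∈ Subgroup.closure {x : G | ∃ g : G, x = g ^ 2},
        Matrix.trace (ρ α : Matrix (Fin 2) (Fin 2) ℂ)
          = Matrix.trace (ρ' α : Matrix (Fin 2) (Fin 2) ℂ)) ∧
    (∀ α ∈ Subgroup.closure {x : G | ∃ g : G, x = g ^ 2},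
        Matrix.trace (ρ α : Matrix (Fin 2) (Fin 2) ℂ) = -2 →
        Matrix.trace (ρ' α : Matrix (Fin 2) (Fin 2) ℂ) = -2) := by
  have key : ∀ α ∈ Subgroup.closure {x : G | ∃ g : G, x = g ^ 2}, ρ α = ρ' α := by
    intro α hα
    have hle : Subgroup.closure {x : G | ∃ g : G, x = g ^ 2} ≤ ρ.eqLocus ρ' := by
      apply Subgroup.closure_le _ |>.mpr
      rintro x ⟨g, rfl⟩
      show ρ (g ^ 2) = ρ' (g ^ 2)
      rw [map_pow, map_pow]
      rcases h g with hg | hg <;> rw [hg]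
      ext i j
      simp [sq]
    exact hle hα
  refine ⟨fun α hα => by rw [key α hα], fun α hα h2 => by rw [← key α hα]; exact h2⟩
end

section
/- (Milnor–Wood inequality.) Let g ≥ 1 and let F₁, F₂, …, F_{2g} be invertible elements (units) of the monoid of monotone degree-one lifts of circle maps, i.e., monotone maps F : ℝ → ℝ with F(x+1) = F(x)+1 that are invertible with monotone degree-one inverse (these are exactly the lifts of orientation-preserving homeomorphisms of the circle ℝ/ℤ). Suppose the product of commutators [F₁,F₂]·[F₃,F₄]⋯[F_{2g−1},F_{2g}] equals the translation x ↦ x + n for some integer n. Then |n| ≤ 2g − 2. -/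
open CircleDeg1Lift

open scoped commutatorElement

/-- Oscillation estimate: for any monotone degree-one lift, `f p - f q < p - q + 1`. -/
lemma MW.osc (f : CircleDeg1Lift) (p q : ℝ) : f p - f q < p - q + 1 := by
  have h0 : p ≤ q + (⌈p - q⌉ : ℤ) := by
    have := Int.le_ceil (p - q); push_cast at this ⊢; linarith
  have h1 : f p ≤ f q + (⌈p - q⌉ : ℤ) :=
    calc f p ≤ f (q + (⌈p - q⌉ : ℤ)) := f.monotone h0
      _ = f q + (⌈p - q⌉ : ℤ) := f.map_add_int q _
  have h2 : ((⌈p - q⌉ : ℤ) : ℝ) < p - q + 1 := Int.ceil_lt_add_one _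
  linarith

/-- A commutator of units moves every point by less than `2`. -/
lemma MW.comm_lt (a b : CircleDeg1Liftˣ) (x : ℝ) :
    (⁅a, b⁆ : CircleDeg1Liftˣ) x < x + 2 := by
  have hval : (⁅a, b⁆ : CircleDeg1Liftˣ) x
      = (a : CircleDeg1Lift) ((b : CircleDeg1Lift)
        (((a⁻¹ : CircleDeg1Liftˣ) : CircleDeg1Lift)
          (((b⁻¹ : CircleDeg1Liftˣ) : CircleDeg1Lift) x))) := by
    show (((⁅a, b⁆ : CircleDeg1Liftˣ) : CircleDeg1Lift)) x = _
    rw [commutatorElement_def]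
    simp only [Units.val_mul, CircleDeg1Lift.mul_apply]
  set t := ((b⁻¹ : CircleDeg1Liftˣ) : CircleDeg1Lift) x with ht
  set s := ((a⁻¹ : CircleDeg1Liftˣ) : CircleDeg1Lift) t with hs
  have hAs : (a : CircleDeg1Lift) s = t := CircleDeg1Lift.units_apply_inv_apply a t
  have hBt : (b : CircleDeg1Lift) t = x := CircleDeg1Lift.units_apply_inv_apply b x
  have h1 : (a : CircleDeg1Lift) ((b : CircleDeg1Lift) s) - (a : CircleDeg1Lift) s
      < (b : CircleDeg1Lift) s - s + 1 := MW.osc (a : CircleDeg1Lift) _ _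
  have h2 : (b : CircleDeg1Lift) s - (b : CircleDeg1Lift) t < s - t + 1 :=
    MW.osc (b : CircleDeg1Lift) _ _
  rw [hval]
  rw [hAs] at h1
  rw [hBt] at h2
  linarith

/-- Sharp estimate: a commutator of units moves some point by less than `1`. -/
lemma MW.comm_exists (a b : CircleDeg1Liftˣ) :
    ∃ x : ℝ, (⁅a, b⁆ : CircleDeg1Liftˣ) x < x + 1 := by
  by_contra hcon
  push_neg at hcon
  -- From the assumption, `a (b y) ≥ b (a y) + 1` for all `y`.
  have key : ∀ y : ℝ, (b : CircleDeg1Lift) ((a : CircleDeg1Lift) y) + 1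
      ≤ (a : CircleDeg1Lift) ((b : CircleDeg1Lift) y) := by
    intro y
    have h := hcon ((b : CircleDeg1Lift) ((a : CircleDeg1Lift) y))
    have hval : (⁅a, b⁆ : CircleDeg1Liftˣ)
        ((b : CircleDeg1Lift) ((a : CircleDeg1Lift) y))
        = (a : CircleDeg1Lift) ((b : CircleDeg1Lift) y) := by
      show (((⁅a, b⁆ : CircleDeg1Liftˣ) : CircleDeg1Lift)) _ = _
      rw [commutatorElement_def]
      simp only [Units.val_mul, CircleDeg1Lift.mul_apply]
      rw [show (((b⁻¹ : CircleDeg1Liftˣ) : CircleDeg1Lift))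
            ((b : CircleDeg1Lift) ((a : CircleDeg1Lift) y))
          = (a : CircleDeg1Lift) y from CircleDeg1Lift.units_inv_apply_apply b _]
      rw [show (((a⁻¹ : CircleDeg1Liftˣ) : CircleDeg1Lift)) ((a : CircleDeg1Lift) y)
          = y from CircleDeg1Lift.units_inv_apply_apply a _]
    rw [hval] at h
    linarith
  -- Iterate: `b (b (a y)) + 2 ≤ a (b (b y))`.
  have key2 : ∀ y : ℝ, (b : CircleDeg1Lift) ((b : CircleDeg1Lift) ((a : CircleDeg1Lift) y)) + 2
      ≤ (a : CircleDeg1Lift) ((b : CircleDeg1Lift) ((b : CircleDeg1Lift) y)) := by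
    intro y
    have h1 := key y
    have h2 := key ((b : CircleDeg1Lift) y)
    have h3 : (b : CircleDeg1Lift) ((b : CircleDeg1Lift) ((a : CircleDeg1Lift) y) + 1)
        ≤ (b : CircleDeg1Lift) ((a : CircleDeg1Lift) ((b : CircleDeg1Lift) y)) :=
      (b : CircleDeg1Lift).monotone h1
    rw [(b : CircleDeg1Lift).map_add_one] at h3
    linarith
  -- Contradiction at `y = 0` via the oscillation estimate.
  have h := key2 0
  set A := (a : CircleDeg1Lift) 0 with hA
  set B2 := (b : CircleDeg1Lift) ((b : CircleDeg1Lift) 0) with hB2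
  have hosc1 : (a : CircleDeg1Lift) B2 - (a : CircleDeg1Lift) 0 < B2 - 0 + 1 :=
    MW.osc (a : CircleDeg1Lift) _ _
  have hosc2 : ((b : CircleDeg1Lift) * (b : CircleDeg1Lift)) 0
      - ((b : CircleDeg1Lift) * (b : CircleDeg1Lift)) A < 0 - A + 1 :=
    MW.osc _ _ _
  simp only [CircleDeg1Lift.mul_apply] at hosc2
  linarith

/-- A nonempty product of commutators of units moves some point by
less than `2 * length - 1`. -/
lemma MW.prod_exists : ∀ (l : List CircleDeg1Liftˣ), l ≠ [] →
    (∀ u ∈ l, ∃ a b : CircleDeg1Liftˣ, u = ⁅a, b⁆) →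
    ∃ x : ℝ, (l.prod : CircleDeg1Liftˣ) x < x + (2 * l.length - 1) := by
  intro l
  induction l with
  | nil => intro h; exact absurd rfl h
  | cons u l ih =>
    intro _ hmem
    obtain ⟨a, b, hab⟩ := hmem u List.mem_cons_self
    rcases eq_or_ne l [] with rfl | hl
    · obtain ⟨x, hx⟩ := MW.comm_exists a b
      refine ⟨x, ?_⟩
      rw [List.prod_cons, List.prod_nil, mul_one, hab]
      have hln : (2 : ℝ) * ((⁅a, b⁆ :: ([] : List CircleDeg1Liftˣ)).length : ℕ) - 1 = 1 := by
        norm_num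
      rw [hln]
      exact hx
    · obtain ⟨x, hx⟩ := ih hl (fun v hv => hmem v (List.mem_cons_of_mem u hv))
      refine ⟨x, ?_⟩
      rw [List.prod_cons]
      have hcomm : ((u * l.prod : CircleDeg1Liftˣ) : CircleDeg1Lift) x
          = (u : CircleDeg1Lift) ((l.prod : CircleDeg1Liftˣ) x) := by
        simp only [Units.val_mul, CircleDeg1Lift.mul_apply]
      have hu : (u : CircleDeg1Liftˣ) ((l.prod : CircleDeg1Liftˣ) x)
          < ((l.prod : CircleDeg1Liftˣ) x) + 2 := by
        rw [hab]; exact MW.comm_lt a b _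
      show ((u * l.prod : CircleDeg1Liftˣ) : CircleDeg1Lift) x < _
      rw [hcomm]
      have : (2 : ℝ) * (u :: l).length - 1 = (2 * l.length - 1) + 2 := by
        simp [List.length_cons]; ring
      rw [this]
      calc (u : CircleDeg1Lift) ((l.prod : CircleDeg1Liftˣ) x)
          < ((l.prod : CircleDeg1Liftˣ) x) + 2 := hu
        _ < x + (2 * l.length - 1) + 2 := by linarith
        _ = x + (2 * l.length - 1 + 2) := by ring

/-- If a nonempty product of `g` commutators of units equals translation by `n`,
then `n ≤ 2 g - 2`. -/
lemma MW.half (g : ℕ) (hg : 1 ≤ g) (n : ℤ) (l : List CircleDeg1Liftˣ)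
    (hlen : l.length = g)
    (hmem : ∀ u ∈ l, ∃ a b : CircleDeg1Liftˣ, u = ⁅a, b⁆)
    (hprod : l.prod = CircleDeg1Lift.translate (Multiplicative.ofAdd (n : ℝ))) :
    n ≤ 2 * (g : ℤ) - 2 := by
  have hne : l ≠ [] := by
    intro h; rw [h] at hlen; simp at hlen; omega
  obtain ⟨x, hx⟩ := MW.prod_exists l hne hmem
  rw [hprod] at hx
  rw [CircleDeg1Lift.translate_apply] at hx
  rw [hlen] at hx
  have : (n : ℝ) < 2 * (g : ℝ) - 1 := by linarith
  have h2 : (n : ℝ) < ((2 * (g : ℤ) - 1 : ℤ) : ℝ) := by push_cast; linarith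
  have h3 : n < 2 * (g : ℤ) - 1 := by exact_mod_cast h2
  omega

/-- **Milnor–Wood inequality.** If `g ≥ 1` and `F 0, …, F (2g-1)` are invertible
monotone degree-one lifts of circle maps (i.e. lifts of orientation-preserving
homeomorphisms of the circle `ℝ/ℤ`), and the product of commutators
`[F 0, F 1]·[F 2, F 3]⋯[F (2g-2), F (2g-1)]` is the translation `x ↦ x + n` for
an integer `n`, then `|n| ≤ 2g - 2`. -/
theorem milnor_wood_inequality
    (g : ℕ) (hg : 1 ≤ g) (F : ℕ → CircleDeg1Liftˣ) (n : ℤ)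
    (hprod :
      ((List.range g).map (fun i => ⁅F (2 * i), F (2 * i + 1)⁆)).prod
        = CircleDeg1Lift.translate (Multiplicative.ofAdd (n : ℝ))) :
    |n| ≤ 2 * (g : ℤ) - 2 := by
  set l : List CircleDeg1Liftˣ :=
    (List.range g).map (fun i => ⁅F (2 * i), F (2 * i + 1)⁆) with hl
  have hlen : l.length = g := by simp [hl]
  have hmem : ∀ u ∈ l, ∃ a b : CircleDeg1Liftˣ, u = ⁅a, b⁆ := by
    intro u hu
    rw [hl, List.mem_map] at hu
    obtain ⟨i, _, rfl⟩ := hu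
    exact ⟨_, _, rfl⟩
  have h1 : n ≤ 2 * (g : ℤ) - 2 := MW.half g hg n l hlen hmem hprod
  -- Lower bound: apply the same to the reversed list of inverses.
  set l' : List CircleDeg1Liftˣ := (l.map fun u => u⁻¹).reverse with hl'
  have hlen' : l'.length = g := by simp [hl', hlen]
  have hmem' : ∀ u ∈ l', ∃ a b : CircleDeg1Liftˣ, u = ⁅a, b⁆ := by
    intro u hu
    rw [hl', List.mem_reverse, List.mem_map] at hu
    obtain ⟨v, hv, rfl⟩ := hu
    obtain ⟨a, b, rfl⟩ := hmem v hv
    exact ⟨b, a, (commutatorElement_inv a b)⟩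
  have hprod' : l'.prod = CircleDeg1Lift.translate (Multiplicative.ofAdd ((-n : ℤ) : ℝ)) := by
    rw [hl', ← List.prod_inv_reverse, hprod]
    rw [← map_inv]
    congr 1
    rw [← ofAdd_neg]
    norm_num
  have h2 : -n ≤ 2 * (g : ℤ) - 2 := MW.half g hg (-n) l' hlen' hmem' hprod'
  rw [abs_le]
  constructor <;> omega
end
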